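/- arXiv:2004.03949 — 2 statements merged into one kernel-verified Lean document; each statement's English description precedes it below -/
import Mathlib

section
/- For every natural number n, A₃(3n+1) ≡ 0 (mod 2) and A₃(3n+2) ≡ 0 (mod 4). -/
/-
Modulo 4 one has `(1 - q^m)^2 = (1 - q^(2m)) (1 - 2 q^m/(1 - q^m))`, and a product of factors
`1 - 2 t_m` equals `1 - 2 ∑ t_m`; hence `E₁² ≡ E₂ (1 - 2Δ)` with `Δ = ∑ d(n) qⁿ`, i.e.
`E₂/E₁² ≡ 1 + 2Δ (mod 4)`. As `E₃/E₆ = F(q³)` with `F = E₁/E₂`, the generating function of `A₃`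
is congruent to `F(q³)(1 + 2Δ)` modulo 4. Its coefficients at `3n + 1` and `3n + 2` are thus
even, and at `3n + 2` each term of the `2 F(q³) Δ` part involves `d(b)` for some `b ≡ 2 (mod 3)`;
such `b` is not a square, so `d(b)` is even.
-/

open PowerSeries Finset

/-- `E k` is the formal power series `∏_{m ≥ 1} (1 - q^(k*m))` in `ℤ⟦q⟧`:
its coefficient of `qⁿ` only depends on the finitely many factors with `k*m ≤ n`
(for `k ≥ 1`), so we may define it coefficientwise via the finite product over
`1 ≤ m ≤ n`. -/
noncomputable def E (k : ℕ) : PowerSeries ℤ :=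
  PowerSeries.mk fun n =>
    PowerSeries.coeff n
      (∏ m ∈ Finset.Icc 1 n, (1 - (PowerSeries.X : PowerSeries ℤ) ^ (k * m)))

/-- The multiplicative inverse of `E k` in `ℤ⟦q⟧` (its constant term is `1`). -/
noncomputable def Einv (k : ℕ) : PowerSeries ℤ := (E k).invOfUnit 1


/-- Restricted overpartitions: ∑ A_m(n)qⁿ = E₂·E_m·E₁⁻²·E_{2m}⁻¹. -/
noncomputable def A (m n : ℕ) : ℤ :=
  PowerSeries.coeff n (E 2 * E m * (Einv 1) ^ 2 * Einv (2 * m))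

theorem Finset.prod_one_sub_two_mul {α ι : Type*} [CommRing α] (h4 : (4 : α) = 0) (s : Finset ι)
    (t : ι → α) : ∏ i ∈ s, (1 - 2 * t i) = 1 - 2 * ∑ i ∈ s, t i := by
  classical
  induction s using Finset.induction_on with
  | empty => simp
  | insert a s ha ih =>
    rw [prod_insert ha, ih, sum_insert ha]
    linear_combination (t a * ∑ i ∈ s, t i) * h4

theorem Nat.even_card_divisors_of_not_isSquare {n : ℕ} (hn : ¬ IsSquare n) : Even #n.divisors := by
  rw [← ZMod.natCast_eq_zero_iff_even, card_eq_sum_ones, Nat.cast_sum, Nat.cast_one]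
  refine sum_involution (fun d _ => n / d) (fun _ _ => by decide) (fun d hd _ hdd => hn ⟨d, ?_⟩)
    (fun d hd => Nat.mem_divisors.2 ⟨Nat.div_dvd_of_dvd (Nat.dvd_of_mem_divisors hd),
      (Nat.mem_divisors.1 hd).2⟩)
    (fun d hd => Nat.div_div_self (Nat.dvd_of_mem_divisors hd) (Nat.mem_divisors.1 hd).2)
  simpa [hdd] using (Nat.div_mul_cancel (Nat.dvd_of_mem_divisors hd)).symm

theorem Nat.not_isSquare_of_mod_three_eq_two {n : ℕ} (hn : n % 3 = 2) : ¬ IsSquare n := by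
  rintro ⟨r, rfl⟩
  rcases (by omega : r % 3 = 0 ∨ r % 3 = 1 ∨ r % 3 = 2) with h | h | h <;>
    simp [Nat.mul_mod, h] at hn

namespace PowerSeries

variable {R S : Type*} [CommRing R] [CommRing S]

theorem sModEq_X_pow_iff {n : ℕ} {F G : R⟦X⟧} :
    F ≡ G [SMOD Ideal.span {(X : R⟦X⟧) ^ n}] ↔ ∀ j < n, coeff j F = coeff j G := by
  simp only [SModEq.sub_mem, Ideal.mem_span_singleton, X_pow_dvd_iff, map_sub, sub_eq_zero]

theorem eq_of_forall_sModEq_X_pow {F G : R⟦X⟧}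
    (h : ∀ n, F ≡ G [SMOD Ideal.span {(X : R⟦X⟧) ^ (n + 1)}]) : F = G :=
  ext fun n => sModEq_X_pow_iff.1 (h n) n n.lt_succ_self

theorem SModEq.map_of_X_pow_dvd {n : ℕ} {F G : R⟦X⟧} (φ : R⟦X⟧ →+* S⟦X⟧)
    (hφ : X ^ n ∣ φ (X ^ n)) (h : F ≡ G [SMOD Ideal.span {(X : R⟦X⟧) ^ n}]) :
    φ F ≡ φ G [SMOD Ideal.span {(X : S⟦X⟧) ^ n}] := by
  rw [SModEq.sub_mem, Ideal.mem_span_singleton] at h ⊢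
  rw [← map_sub]
  exact hφ.trans (map_dvd φ h)

theorem prod_one_sub_X_pow_sModEq {k j n : ℕ} (hk : k ≠ 0) (hjn : j ≤ n) :
    ∏ m ∈ Icc 1 n, (1 - (X : R⟦X⟧) ^ (k * m)) ≡ ∏ m ∈ Icc 1 j, (1 - X ^ (k * m))
      [SMOD Ideal.span {(X : R⟦X⟧) ^ (j + 1)}] := by
  induction n, hjn using Nat.le_induction with
  | base => rfl
  | succ n hjn ih =>
    have hX : (X : R⟦X⟧) ^ (k * (n + 1)) ≡ 0 [SMOD Ideal.span {(X : R⟦X⟧) ^ (j + 1)}] :=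
      SModEq.zero.2 <| Ideal.mem_span_singleton.2 <|
        pow_dvd_pow X (by nlinarith [Nat.one_le_iff_ne_zero.2 hk])
    rw [prod_Icc_succ_top (by omega)]
    grw [ih, hX, sub_zero, mul_one]

section lambert

variable (R)

noncomputable def lambertTerm (m : ℕ) : R⟦X⟧ :=
  mk fun j => if m ∣ j ∧ j ≠ 0 then 1 else 0

noncomputable def divisorCountSeries : R⟦X⟧ :=
  mk fun n => (#n.divisors : R)

variable {R}

theorem one_sub_X_pow_mul_lambertTerm {m : ℕ} (hm : m ≠ 0) :
    (1 - X ^ m) * lambertTerm R m = X ^ m := by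
  ext j
  rw [sub_mul, one_mul, map_sub, coeff_X_pow_mul', coeff_X_pow, lambertTerm, coeff_mk]
  rcases le_or_gt m j with hmj | hjm
  · obtain ⟨i, rfl⟩ := Nat.exists_eq_add_of_le hmj
    by_cases hi : i = 0 <;> simp [hi, hm, Nat.dvd_add_self_left]
  · have hj : ¬ (m ∣ j ∧ j ≠ 0) := fun h => (Nat.le_of_dvd (Nat.pos_of_ne_zero h.2) h.1).not_gt hjm
    simp [hj, hjm.not_ge, hjm.ne]

theorem divisorCountSeries_sModEq_sum (n : ℕ) :
    divisorCountSeries R ≡ ∑ m ∈ Icc 1 n, lambertTerm R m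
      [SMOD Ideal.span {(X : R⟦X⟧) ^ (n + 1)}] := by
  refine sModEq_X_pow_iff.2 fun j hj => Eq.symm ?_
  simp only [map_sum, lambertTerm, divisorCountSeries, coeff_mk]
  rw [sum_boole]
  congr 2
  ext d
  simp only [mem_filter, mem_Icc, Nat.mem_divisors]
  constructor
  · rintro ⟨-, h⟩; exact h
  · rintro ⟨hd, hj0⟩
    exact ⟨⟨Nat.pos_of_dvd_of_pos hd (Nat.pos_of_ne_zero hj0),
      (Nat.le_of_dvd (Nat.pos_of_ne_zero hj0) hd).trans (by omega)⟩, hd, hj0⟩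

-- `(1 - X ^ (2 * m)) * (1 - 2 * lambertTerm R m) = (1 + X ^ m) * (1 - 3 * X ^ m)`
theorem sq_one_sub_X_pow {m : ℕ} (hm : m ≠ 0) (h4 : (4 : R⟦X⟧) = 0) :
    (1 - X ^ m) ^ 2 = (1 - X ^ (2 * m)) * (1 - 2 * lambertTerm R m) := by
  linear_combination (2 * (1 + X ^ m)) * one_sub_X_pow_mul_lambertTerm (R := R) hm +
    X ^ (2 * m) * h4

end lambert

end PowerSeries

theorem E_sModEq_prod {k : ℕ} (hk : k ≠ 0) (n : ℕ) :
    E k ≡ ∏ m ∈ Icc 1 n, (1 - X ^ (k * m)) [SMOD Ideal.span {(X : ℤ⟦X⟧) ^ (n + 1)}] :=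
  sModEq_X_pow_iff.2 fun j hj => by
    rw [E, coeff_mk]
    exact sModEq_X_pow_iff.1 (prod_one_sub_X_pow_sModEq hk (by omega)).symm j j.lt_succ_self

theorem constantCoeff_E (k : ℕ) : constantCoeff (E k) = 1 := by
  simp [E]

theorem E_mul_Einv (k : ℕ) : E k * Einv k = 1 :=
  mul_invOfUnit _ _ (by rw [constantCoeff_E]; rfl)

theorem E_mul_eq_expand {k j : ℕ} (hk : k ≠ 0) (hj : j ≠ 0) : E (k * j) = expand k hk (E j) := by
  refine eq_of_forall_sModEq_X_pow fun n => ?_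
  have hexp : (X : ℤ⟦X⟧) ^ (n + 1) ∣ expand k hk (X ^ (n + 1)) := by
    rw [map_pow, expand_X, ← pow_mul]
    exact pow_dvd_pow X (Nat.le_mul_of_pos_left _ (Nat.pos_of_ne_zero hk))
  calc E (k * j) ≡ ∏ m ∈ Icc 1 n, (1 - X ^ (k * j * m)) [SMOD _] := E_sModEq_prod (by positivity) n
    _ = expand k hk (∏ m ∈ Icc 1 n, (1 - X ^ (j * m))) := by simp [map_prod, pow_mul, mul_assoc]
    _ ≡ expand k hk (E j) [SMOD _] :=
      ((E_sModEq_prod hj n).symm.map_of_X_pow_dvd (expand k hk).toRingHom hexp)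

theorem Einv_mul_eq_expand {k j : ℕ} (hk : k ≠ 0) (hj : j ≠ 0) :
    Einv (k * j) = expand k hk (Einv j) :=
  left_inv_eq_right_inv (by rw [mul_comm, E_mul_Einv])
    (by rw [E_mul_eq_expand hk hj, ← map_mul, E_mul_Einv, map_one])

theorem map_E_sModEq_prod {R : Type*} [CommRing R] (f : ℤ →+* R) {k : ℕ} (hk : k ≠ 0) (n : ℕ) :
    map f (E k) ≡ ∏ m ∈ Icc 1 n, (1 - X ^ (k * m)) [SMOD Ideal.span {(X : R⟦X⟧) ^ (n + 1)}] := by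
  simpa [map_prod] using (E_sModEq_prod hk n).map_of_X_pow_dvd (map f) (by simp)

section ModFour

variable {R : Type*} [CommRing R]

theorem map_E_one_sq (h4 : (4 : R) = 0) :
    map (Int.castRingHom R) (E 1) ^ 2 =
      map (Int.castRingHom R) (E 2) * (1 - 2 * divisorCountSeries R) := by
  have h4' : (4 : R⟦X⟧) = 0 := by rw [← map_ofNat C, h4, map_zero]
  refine eq_of_forall_sModEq_X_pow fun n => ?_
  have hprod : (∏ m ∈ Icc 1 n, (1 - (X : R⟦X⟧) ^ (1 * m))) ^ 2 =
      (∏ m ∈ Icc 1 n, (1 - X ^ (2 * m))) * (1 - 2 * ∑ m ∈ Icc 1 n, lambertTerm R m) := by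
    rw [← prod_pow, ← prod_one_sub_two_mul h4', ← prod_mul_distrib]
    refine prod_congr rfl fun m hm => ?_
    rw [one_mul]
    exact sq_one_sub_X_pow (by simp at hm; omega) h4'
  grw [map_E_sModEq_prod _ one_ne_zero n, map_E_sModEq_prod _ two_ne_zero n,
    divisorCountSeries_sModEq_sum n, hprod]

theorem map_E_two_mul_Einv_one_sq (h4 : (4 : R) = 0) :
    map (Int.castRingHom R) (E 2 * Einv 1 ^ 2) = 1 + 2 * divisorCountSeries R := by
  have h4' : (4 : R⟦X⟧) = 0 := by rw [← map_ofNat C, h4, map_zero]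
  refine left_inv_eq_right_inv ?_
    (by linear_combination (-divisorCountSeries R ^ 2) * h4' :
      (1 - 2 * divisorCountSeries R) * (1 + 2 * divisorCountSeries R) = 1)
  rw [map_mul, map_pow, mul_right_comm, ← map_E_one_sq h4, ← mul_pow, ← map_mul, E_mul_Einv,
    map_one, one_pow]

theorem intCast_A {m : ℕ} (hm : m ≠ 0) (h4 : (4 : R) = 0) (N : ℕ) :
    (A m N : R) = coeff N (expand m hm (map (Int.castRingHom R) (E 1 * Einv 2))) + 2 *
      coeff N (divisorCountSeries R * expand m hm (map (Int.castRingHom R) (E 1 * Einv 2))) := by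
  have hEm : E m * Einv (2 * m) = expand m hm (E 1 * Einv 2) := by
    rw [map_mul, ← E_mul_eq_expand hm one_ne_zero, ← Einv_mul_eq_expand hm two_ne_zero, mul_one,
      mul_comm 2 m]
  rw [A, ← eq_intCast (Int.castRingHom R), ← coeff_map,
    show E 2 * E m * Einv 1 ^ 2 * Einv (2 * m) = E 2 * Einv 1 ^ 2 * (E m * Einv (2 * m)) by ring,
    map_mul, map_E_two_mul_Einv_one_sq h4, hEm, map_expand, add_mul, one_mul, map_add, mul_assoc,
    two_mul, map_add, two_mul]

theorem two_mul_coeff_divisorCountSeries_mul_expand_three (h4 : (4 : R) = 0) (F : R⟦X⟧) {N : ℕ}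
    (hN : N % 3 = 2) : 2 * coeff N (divisorCountSeries R * expand 3 three_ne_zero F) = 0 := by
  rw [coeff_mul, mul_sum]
  refine sum_eq_zero fun ⟨a, b⟩ hab => ?_
  rw [HasAntidiagonal.mem_antidiagonal] at hab
  by_cases hb : 3 ∣ b
  · obtain ⟨c, hc⟩ := Nat.even_card_divisors_of_not_isSquare
      (Nat.not_isSquare_of_mod_three_eq_two (n := a) (by omega))
    rw [divisorCountSeries, coeff_mk, hc, Nat.cast_add]
    linear_combination ((c : R) * coeff b (expand 3 three_ne_zero F)) * h4
  · rw [coeff_expand_of_not_dvd _ _ _ hb, mul_zero, mul_zero]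

end ModFour

theorem A3_congruences (n : ℕ) :
    (2 : ℤ) ∣ A 3 (3 * n + 1) ∧ (4 : ℤ) ∣ A 3 (3 * n + 2) := by
  refine ⟨(ZMod.intCast_zmod_eq_zero_iff_dvd _ 2).1 ?_,
    (ZMod.intCast_zmod_eq_zero_iff_dvd _ 4).1 ?_⟩
  · rw [intCast_A three_ne_zero (by decide), coeff_expand_of_not_dvd _ _ _ (by omega),
      show (2 : ZMod 2) = 0 from rfl, zero_mul, add_zero]
  · rw [intCast_A three_ne_zero (by decide), coeff_expand_of_not_dvd _ _ _ (by omega), zero_add]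
    exact two_mul_coeff_divisorCountSeries_mul_expand_three (by decide) _ (by omega)
end

section
/- For every positive integer N with N ≡ 0, 3, 5, or 6 (mod 7), the Ramanujan tau function satisfies τ(N) ≡ 0 (mod 7). -/
open PowerSeries Finset

/-- Ramanujan tau: τ(n) = [q^{n-1}](E₁²⁴), so that ∑_{n≥1} τ(n)qⁿ = q·E₁²⁴. -/
noncomputable def tau (n : ℕ) : ℤ :=
  PowerSeries.coeff (n - 1) ((E 1) ^ 24)

/-!
Modulo 7 the Frobenius gives `E₁²¹ ≡ E₁³(q⁷)`, so `E₁²⁴ ≡ E₁³(q⁷) · E₁³`. By Jacobi's identity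
`E₁³ = ∑_{j ≥ 0} (-1)ʲ (2j+1) q^(j(j+1)/2)`, and `j(j+1)/2 mod 7` lies in `{0, 1, 3, 6}`, the
value 6 occurring only when `7 ∣ 2j+1`. Hence the coefficients of `E₁³`, and then those of `E₁²⁴`,
at exponents `≡ 2, 4, 5, 6 (mod 7)` vanish mod 7; `τ(N)` is the coefficient of `q^(N-1)`.

Jacobi's identity is only needed modulo `q^(n+1)`. It comes from the finite triple product
`∏_{m<N} (1 - q^(m+1) y)(y - q^m) = ∑_k (-1)^(N+k) q^t(k-N) [2N, k]_q y^k`, `t(i) = i(i+1)/2`,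
differentiated at `y = 1`, which gives `(q;q)_N (q;q)_(N-1)` on the left. Modulo `q^(n+1)` with
`N = 2n+1`, every Gaussian binomial that survives becomes the inverse of `(q;q)_n`, and the terms
`k = N + j` and `k = N - 1 - j` pair up to `(-1)^j (2j+1) q^t(j)`.
-/
open Polynomial

namespace RamanujanTau

local notation "q" => (Polynomial.X : ℤ[X])

-- `i(i+1)/2 ≥ 0` for every integer `i`, so `toNat` loses nothing.
def triangular (i : ℤ) : ℕ := (i * (i + 1) / 2).toNat

theorem two_mul_triangular (i : ℤ) : 2 * (triangular i : ℤ) = i * (i + 1) := by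
  have h : 0 ≤ i * (i + 1) := by rcases le_or_gt 0 i with h | h <;> nlinarith
  rw [triangular, Int.toNat_of_nonneg (Int.ediv_nonneg h (by norm_num))]
  exact Int.mul_ediv_cancel' (Int.even_mul_succ_self i).two_dvd

theorem triangular_add_one (i : ℤ) : (triangular (i + 1) : ℤ) = triangular i + (i + 1) := by
  linarith [two_mul_triangular i, two_mul_triangular (i + 1)]

theorem triangular_neg_sub_one (i : ℤ) : triangular (-i - 1) = triangular i := by
  rw [triangular, triangular]; ring_nf

theorem le_triangular (i : ℤ) : i ≤ triangular i := by nlinarith [two_mul_triangular i]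

theorem mem_Icc_of_triangular_le {i : ℤ} {n : ℕ} (h : triangular i ≤ n) :
    i ∈ Set.Icc (-(n + 1 : ℤ)) n := by
  have := two_mul_triangular i
  constructor <;> nlinarith

noncomputable def gaussBinom : ℕ → ℕ → ℤ[X]
  | _, 0 => 1
  | 0, _ + 1 => 0
  | n + 1, k + 1 => gaussBinom n k + q ^ (k + 1) * gaussBinom n (k + 1)

@[simp] theorem gaussBinom_zero_right (n : ℕ) : gaussBinom n 0 = 1 := by cases n <;> rfl

theorem gaussBinom_succ_succ (n k : ℕ) :
    gaussBinom (n + 1) (k + 1) = gaussBinom n k + q ^ (k + 1) * gaussBinom n (k + 1) := by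
  rw [gaussBinom]

theorem gaussBinom_eq_zero_of_lt : ∀ {n k : ℕ}, n < k → gaussBinom n k = 0
  | 0, _ + 1, _ => rfl
  | n + 1, k + 1, h => by
    rw [gaussBinom_succ_succ, gaussBinom_eq_zero_of_lt (by omega : n < k),
      gaussBinom_eq_zero_of_lt (by omega : n < k + 1), mul_zero, add_zero]

@[simp] theorem gaussBinom_self : ∀ n : ℕ, gaussBinom n n = 1
  | 0 => rfl
  | n + 1 => by
    rw [gaussBinom_succ_succ, gaussBinom_self n, gaussBinom_eq_zero_of_lt n.lt_succ_self, mul_zero,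
      add_zero]

-- `(q^(a+1); q)_b`; in particular `qPoch 0 n = (q; q)_n`.
noncomputable def qPoch (a b : ℕ) : ℤ[X] := ∏ m ∈ Finset.range b, (1 - q ^ (a + m + 1))

theorem qPoch_succ (a b : ℕ) : qPoch a (b + 1) = qPoch a b * (1 - q ^ (a + b + 1)) :=
  Finset.prod_range_succ _ _

theorem qPoch_add (a b c : ℕ) : qPoch a (b + c) = qPoch a b * qPoch (a + b) c := by
  rw [qPoch, Finset.prod_range_add, qPoch, qPoch]
  congr 1; refine Finset.prod_congr rfl fun m _ => ?_; ring_nf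

theorem qPoch_succ' (a b : ℕ) : qPoch a (b + 1) = (1 - q ^ (a + 1)) * qPoch (a + 1) b := by
  rw [add_comm b, qPoch_add]; simp [qPoch]

theorem qPoch_ne_zero (a b : ℕ) : qPoch a b ≠ 0 := fun h => by
  simpa [qPoch, eval_prod] using congrArg (eval 0) h

theorem gaussBinom_mul_qPoch (a b : ℕ) : gaussBinom (a + b) b * qPoch 0 b = qPoch a b := by
  induction b generalizing a with
  | zero => simp [qPoch]
  | succ b ihb =>
    induction a with
    | zero => simp
    | succ a iha =>
      rw [show a + 1 + (b + 1) = a + (b + 1) + 1 by ring, gaussBinom_succ_succ, qPoch_succ 0 b,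
        qPoch_succ (a + 1) b]
      rw [qPoch_succ 0 b] at iha
      have h1 := ihb (a + 1)
      rw [show a + 1 + b = a + (b + 1) by ring] at h1
      linear_combination (1 - q ^ (b + 1)) * h1 + q ^ (b + 1) * iha
        + q ^ (b + 1) * qPoch_succ' a b

theorem gaussBinom_succ_succ' (n k : ℕ) :
    gaussBinom (n + 1) (k + 1) = q ^ (n - k) * gaussBinom n k + gaussBinom n (k + 1) := by
  rcases lt_trichotomy k n with hlt | rfl | hgt
  · obtain ⟨a, rfl⟩ : ∃ a, n = a + k + 1 := ⟨n - k - 1, by omega⟩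
    -- after multiplying by `(q; q)_(k+1)`, every term is a product given by `gaussBinom_mul_qPoch`
    apply mul_right_cancel₀ (qPoch_ne_zero 0 (k + 1))
    have e1 := gaussBinom_mul_qPoch (a + 1) (k + 1)
    have e2 := gaussBinom_mul_qPoch (a + 1) k
    have e3 := gaussBinom_mul_qPoch a (k + 1)
    rw [show a + 1 + (k + 1) = a + k + 1 + 1 by ring, qPoch_succ (a + 1) k] at e1
    rw [show a + 1 + k = a + k + 1 by ring] at e2
    rw [show a + (k + 1) = a + k + 1 by ring, qPoch_succ' a k] at e3
    rw [show a + k + 1 - k = a + 1 by omega]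
    linear_combination e1 - q ^ (a + 1) * (1 - q ^ (0 + k + 1)) * e2 - e3
      - q ^ (a + 1) * gaussBinom (a + k + 1) k * qPoch_succ 0 k
  · simp [gaussBinom_eq_zero_of_lt]
  · rw [gaussBinom_eq_zero_of_lt (by omega : n + 1 < k + 1), gaussBinom_eq_zero_of_lt hgt,
      gaussBinom_eq_zero_of_lt (by omega : n < k + 1)]
    ring

theorem gaussBinom_add_two_add_two (n k : ℕ) :
    gaussBinom (n + 2) (k + 2) = q ^ (n - k) * gaussBinom n k
      + (1 + q ^ (n + 1)) * gaussBinom n (k + 1) + q ^ (k + 2) * gaussBinom n (k + 2) := by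
  rw [gaussBinom_succ_succ (n + 1) (k + 1), gaussBinom_succ_succ' n k,
    gaussBinom_succ_succ' n (k + 1)]
  rcases lt_or_ge k n with hlt | hge
  · have h : q ^ (k + 2) * q ^ (n - (k + 1)) = q ^ (n + 1) := by
      rw [← pow_add]; congr 1; omega
    linear_combination gaussBinom n (k + 1) * h
  · rw [gaussBinom_eq_zero_of_lt (by omega : n < k + 1),
      gaussBinom_eq_zero_of_lt (by omega : n < k + 2)]
    ring

theorem gaussBinom_add_two_one (n : ℕ) :
    gaussBinom (n + 2) 1 = 1 + q ^ (n + 1) + q * gaussBinom n 1 := by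
  rw [gaussBinom_succ_succ (n + 1) 0, gaussBinom_succ_succ' n 0]
  simp only [gaussBinom_zero_right, Nat.sub_zero]
  ring

local notation "Y" => (Polynomial.X : ℤ[X][X])

noncomputable def tripleProd (N : ℕ) : ℤ[X][X] :=
  ∏ m ∈ Finset.range N, (1 - Polynomial.C (q ^ (m + 1)) * Y) * (Y - Polynomial.C (q ^ m))

noncomputable def tripleCoeff (N k : ℕ) : ℤ[X] :=
  (-1) ^ (N + k) * q ^ triangular ((k : ℤ) - N) * gaussBinom (2 * N) k

theorem tripleProd_succ (N : ℕ) : tripleProd (N + 1) =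
    Y * (Polynomial.C (1 + q ^ N * q ^ (N + 1)) * tripleProd N)
      - Polynomial.C (q ^ N) * tripleProd N
      - Y ^ 2 * (Polynomial.C (q ^ (N + 1)) * tripleProd N) := by
  rw [tripleProd, Finset.prod_range_succ, ← tripleProd]
  simp only [map_add, map_mul, map_one]
  ring

theorem tripleCoeff_succ_add_two (N k : ℕ) : tripleCoeff (N + 1) (k + 2) =
    (1 + q ^ N * q ^ (N + 1)) * tripleCoeff N (k + 1) - q ^ N * tripleCoeff N (k + 2)
      - q ^ (N + 1) * tripleCoeff N k := by
  set i : ℤ := k + 1 - N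
  have e0 : triangular ((k + 2 : ℕ) - (N + 1 : ℕ)) = triangular i := by congr 1; push_cast; ring
  have e1 : q ^ N * q ^ triangular ((k + 2 : ℕ) - N) = q ^ triangular i * q ^ (k + 2) := by
    rw [← pow_add, ← pow_add, show ((k + 2 : ℕ) : ℤ) - N = i + 1 by push_cast; ring]
    congr 1; zify; linarith [triangular_add_one i]
  simp only [tripleCoeff, e0, show ((k + 1 : ℕ) : ℤ) - N = i by push_cast; ring,
    show 2 * (N + 1) = 2 * N + 2 by ring, gaussBinom_add_two_add_two]
  rcases le_or_gt k (2 * N) with hk | hk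
  · have e2 : q ^ (N + 1) * q ^ triangular (k - N) = q ^ triangular i * q ^ (2 * N - k) := by
      rw [← pow_add, ← pow_add, show (k : ℤ) - N = (i - 1) by ring]
      have := triangular_add_one (i - 1)
      rw [sub_add_cancel] at this
      congr 1; zify [hk]; linarith
    linear_combination
      (-1) ^ (N + k) * (gaussBinom (2 * N) (k + 2) * e1 + gaussBinom (2 * N) k * e2)
  · rw [gaussBinom_eq_zero_of_lt hk, gaussBinom_eq_zero_of_lt (by omega : 2 * N < k + 1),
      gaussBinom_eq_zero_of_lt (by omega : 2 * N < k + 2)]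
    ring

theorem tripleCoeff_succ_zero (N : ℕ) : tripleCoeff (N + 1) 0 = -(q ^ N * tripleCoeff N 0) := by
  have e : q ^ triangular ((0 : ℕ) - (N + 1 : ℕ)) = q ^ N * q ^ triangular ((0 : ℕ) - N) := by
    rw [← pow_add, show ((0 : ℕ) : ℤ) - (N + 1 : ℕ) = -N - 1 by push_cast; ring,
      show ((0 : ℕ) : ℤ) - N = -N - 1 + 1 by push_cast; ring]
    congr 1; zify; linarith [triangular_add_one (-N - 1)]
  simp only [tripleCoeff, e, gaussBinom_zero_right]
  ring

theorem tripleCoeff_succ_one (N : ℕ) : tripleCoeff (N + 1) 1 =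
    (1 + q ^ N * q ^ (N + 1)) * tripleCoeff N 0 - q ^ N * tripleCoeff N 1 := by
  have e0 : triangular ((1 : ℕ) - (N + 1 : ℕ)) = triangular ((0 : ℕ) - N) := by
    congr 1; push_cast; ring
  have e1 : q ^ N * q ^ triangular ((1 : ℕ) - N) = q ^ triangular ((0 : ℕ) - N) * q := by
    rw [← pow_add, ← pow_succ, show ((1 : ℕ) : ℤ) - N = -N + 1 by push_cast; ring,
      show ((0 : ℕ) : ℤ) - N = -N by push_cast; ring]
    congr 1; zify; linarith [triangular_add_one (-N)]
  simp only [tripleCoeff, e0, show 2 * (N + 1) = 2 * N + 2 by ring, gaussBinom_add_two_one,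
    gaussBinom_zero_right]
  linear_combination -(-1) ^ N * gaussBinom (2 * N) 1 * e1

theorem coeff_tripleProd (N k : ℕ) : (tripleProd N).coeff k = tripleCoeff N k := by
  induction N generalizing k with
  | zero =>
    rcases k with _ | k
    · simp [tripleProd, tripleCoeff, triangular]
    · simp [tripleProd, tripleCoeff, gaussBinom_eq_zero_of_lt, Polynomial.coeff_one]
  | succ N ih =>
    rcases k with _ | _ | k <;>
      simp only [tripleProd_succ, coeff_sub, Polynomial.coeff_C_mul, Polynomial.coeff_X_pow_mul',
        Polynomial.coeff_X_mul, Polynomial.coeff_X_mul_zero, ih]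
    · simp [tripleCoeff_succ_zero]
    · simp [tripleCoeff_succ_one]
    · simp [tripleCoeff_succ_add_two]

theorem tripleProd_eq_sum (N : ℕ) :
    tripleProd N = ∑ k ∈ Finset.range (2 * N + 1), Polynomial.C (tripleCoeff N k) * Y ^ k := by
  have hdeg : (tripleProd N).natDegree < 2 * N + 1 := Nat.lt_succ_of_le <|
    natDegree_le_iff_coeff_eq_zero.mpr fun k hk => by
      rw [coeff_tripleProd, tripleCoeff, gaussBinom_eq_zero_of_lt hk, mul_zero]
  conv_lhs => rw [as_sum_range_C_mul_X_pow' _ hdeg]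
  simp_rw [coeff_tripleProd]

theorem eval_derivative_mul_X_sub_C {R : Type*} [CommRing R] (p : R[X]) (a : R) :
    eval a (derivative (p * (Polynomial.X - Polynomial.C a))) = eval a p := by
  rw [derivative_mul, eval_add, eval_mul, eval_sub, eval_X, eval_C, sub_self, mul_zero, zero_add,
    derivative_X_sub_C, mul_one]

theorem eval_one_derivative_tripleProd (N : ℕ) :
    eval 1 (derivative (tripleProd (N + 1))) = qPoch 0 (N + 1) * qPoch 0 N := by
  rw [tripleProd, Finset.prod_range_succ', pow_zero, ← mul_assoc, eval_derivative_mul_X_sub_C,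
    qPoch_succ', qPoch, qPoch, mul_assoc, ← Finset.prod_mul_distrib]
  simp only [map_pow, zero_add, pow_one, eval_mul, eval_prod, eval_sub, eval_one, eval_pow, eval_C,
    eval_X, mul_one]
  ring_nf

theorem qPoch_succ_mul_qPoch (N : ℕ) :
    qPoch 0 (N + 1) * qPoch 0 N = ∑ k ∈ Finset.range (2 * N + 3), tripleCoeff (N + 1) k * k := by
  rw [← eval_one_derivative_tripleProd, tripleProd_eq_sum, show 2 * (N + 1) + 1 = 2 * N + 3 by ring]
  simp only [derivative_sum, derivative_C_mul_X_pow, eval_finsetSum, eval_C, eval_mul, eval_pow,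
    eval_X, one_pow, mul_one]

noncomputable def jacobiPoly (M : ℕ) : ℤ[X] :=
  ∑ j ∈ Finset.range M, Polynomial.C ((-1 : ℤ) ^ j * (2 * j + 1)) * q ^ triangular j

theorem sum_signed_triangular_eq_jacobiPoly (M : ℕ) :
    ∑ k ∈ Finset.range (2 * M + 1),
        Polynomial.C ((-1 : ℤ) ^ (M + k) * k) * q ^ triangular ((k : ℤ) - M)
      = jacobiPoly M + Polynomial.C ((-1 : ℤ) ^ M * (2 * M)) * q ^ triangular M := by
  rw [Finset.sum_range_succ, two_mul, Finset.sum_range_add, ← Finset.sum_range_reflect,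
    ← Finset.sum_add_distrib, jacobiPoly]
  congr 1
  · refine Finset.sum_congr rfl fun j hj => ?_
    obtain ⟨r, rfl⟩ : ∃ r, M = j + 1 + r := ⟨M - j - 1, by have := Finset.mem_range.mp hj; omega⟩
    rw [show j + 1 + r - 1 - j = r by omega,
      show (r : ℤ) - (j + 1 + r : ℕ) = -j - 1 by push_cast; ring, triangular_neg_sub_one,
      show ((j + 1 + r + j : ℕ) : ℤ) - (j + 1 + r : ℕ) = j by push_cast; ring, ← add_mul,
      ← map_add, show j + 1 + r + r = j + 1 + 2 * r by ring,
      show j + 1 + r + (j + 1 + r + j) = j + 2 * (j + 1 + r) by ring]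
    simp only [pow_add, pow_mul, neg_one_sq, one_pow, mul_one, pow_one]
    congr 2
    push_cast
    ring
  · rw [show ((M + M : ℕ) : ℤ) - M = M by push_cast; ring]
    congr 2
    simp only [pow_add, ← two_mul, pow_mul, neg_one_sq, one_pow]
    push_cast
    ring

theorem mk_pow_eq_zero {D m : ℕ} (h : D ≤ m) :
    Ideal.Quotient.mk (Ideal.span {q ^ D}) (q ^ m) = 0 :=
  Ideal.Quotient.eq_zero_iff_mem.mpr (Ideal.mem_span_singleton.mpr (pow_dvd_pow q h))

theorem mk_qPoch_eq_one {D a : ℕ} (b : ℕ) (h : D ≤ a + 1) :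
    Ideal.Quotient.mk (Ideal.span {q ^ D}) (qPoch a b) = 1 := by
  rw [qPoch, map_prod]
  exact Finset.prod_eq_one fun m _ => by rw [map_sub, map_one, mk_pow_eq_zero (by omega), sub_zero]

theorem mk_qPoch_zero_of_le {D n N : ℕ} (hD : D ≤ n + 1) (hn : n ≤ N) :
    Ideal.Quotient.mk (Ideal.span {q ^ D}) (qPoch 0 N)
      = Ideal.Quotient.mk (Ideal.span {q ^ D}) (qPoch 0 n) := by
  obtain ⟨c, rfl⟩ := Nat.exists_eq_add_of_le hn
  rw [qPoch_add, map_mul, mk_qPoch_eq_one c (by simpa using hD), mul_one]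

theorem mk_gaussBinom_mul_qPoch {D n a b : ℕ} (hD : D ≤ n + 1) (ha : n ≤ a) (hb : n ≤ b) :
    Ideal.Quotient.mk (Ideal.span {q ^ D}) (gaussBinom (a + b) b * qPoch 0 n) = 1 := by
  rw [map_mul, ← mk_qPoch_zero_of_le hD hb, ← map_mul, gaussBinom_mul_qPoch,
    mk_qPoch_eq_one b (by omega)]

theorem mk_tripleCoeff_mul_qPoch (n k : ℕ) (hk : k ≤ 2 * (2 * n + 1)) :
    Ideal.Quotient.mk (Ideal.span {q ^ (n + 1)}) (tripleCoeff (2 * n + 1) k * k * qPoch 0 n)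
      = Ideal.Quotient.mk (Ideal.span {q ^ (n + 1)})
          (Polynomial.C ((-1 : ℤ) ^ (2 * n + 1 + k) * k)
            * q ^ triangular ((k : ℤ) - (2 * n + 1 : ℕ))) := by
  have h : tripleCoeff (2 * n + 1) k * k * qPoch 0 n
      = Polynomial.C ((-1 : ℤ) ^ (2 * n + 1 + k) * k) * q ^ triangular ((k : ℤ) - (2 * n + 1 : ℕ))
        * (gaussBinom (2 * (2 * n + 1)) k * qPoch 0 n) := by
    simp only [tripleCoeff, map_mul, map_pow, map_neg, map_one, map_natCast]
    ring
  rw [h, map_mul _ _ (gaussBinom _ _ * _)]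
  by_cases ht : triangular ((k : ℤ) - (2 * n + 1 : ℕ)) ≤ n
  · obtain ⟨hge, hle⟩ := mem_Icc_of_triangular_le ht
    rw [← Nat.sub_add_cancel hk, mk_gaussBinom_mul_qPoch le_rfl (by omega) (by omega), mul_one]
  · rw [map_mul, mk_pow_eq_zero (by omega), mul_zero, zero_mul]

theorem mk_qPoch_pow_three_eq_jacobiPoly (n : ℕ) :
    Ideal.Quotient.mk (Ideal.span {q ^ (n + 1)}) (qPoch 0 n ^ 3)
      = Ideal.Quotient.mk (Ideal.span {q ^ (n + 1)}) (jacobiPoly (2 * n + 1)) := by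
  set π := Ideal.Quotient.mk (Ideal.span {q ^ (n + 1)})
  have hprod : π (qPoch 0 n ^ 3) = π (qPoch 0 (2 * n + 1) * qPoch 0 (2 * n) * qPoch 0 n) := by
    rw [map_mul, map_mul, mk_qPoch_zero_of_le le_rfl (by omega : n ≤ 2 * n + 1),
      mk_qPoch_zero_of_le le_rfl (by omega : n ≤ 2 * n), map_pow, pow_three, mul_assoc]
  have htail : π (Polynomial.C ((-1 : ℤ) ^ (2 * n + 1) * (2 * (2 * n + 1 : ℕ)))
      * q ^ triangular (2 * n + 1 : ℕ)) = 0 := by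
    rw [map_mul, mk_pow_eq_zero (by have := le_triangular (2 * n + 1 : ℕ); omega), mul_zero]
  rw [hprod, qPoch_succ_mul_qPoch, Finset.sum_mul, map_sum,
    Finset.sum_congr rfl fun k hk =>
      mk_tripleCoeff_mul_qPoch n k (by have := Finset.mem_range.mp hk; omega),
    ← map_sum, show 2 * (2 * n) + 3 = 2 * (2 * n + 1) + 1 by ring,
    sum_signed_triangular_eq_jacobiPoly, map_add, htail, add_zero]

theorem coeff_eq_of_mk_eq {D j : ℕ} {f g : ℤ[X]}
    (h : Ideal.Quotient.mk (Ideal.span {q ^ D}) f = Ideal.Quotient.mk (Ideal.span {q ^ D}) g)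
    (hj : j < D) : f.coeff j = g.coeff j := by
  rw [Ideal.Quotient.eq, Ideal.mem_span_singleton, Polynomial.X_pow_dvd_iff] at h
  exact sub_eq_zero.mp (by simpa using h j hj)

theorem coeff_E_one {j n : ℕ} (hj : j ≤ n) :
    PowerSeries.coeff j (E 1) = (qPoch 0 n).coeff j := by
  have h : ∏ m ∈ Finset.Icc 1 j, (1 - (PowerSeries.X : PowerSeries ℤ) ^ (1 * m))
      = ((qPoch 0 j : ℤ[X]) : PowerSeries ℤ) := by
    rw [qPoch, ← Polynomial.coeToPowerSeries.ringHom_apply, map_prod,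
      ← Finset.Ico_add_one_right_eq_Icc, Finset.prod_Ico_eq_prod_range]
    refine Finset.prod_congr (by simp) fun m _ => ?_
    simp [add_comm]
  rw [E, PowerSeries.coeff_mk, h, Polynomial.coeff_coe]
  exact coeff_eq_of_mk_eq (mk_qPoch_zero_of_le le_rfl hj).symm j.lt_succ_self

theorem tau_succ_eq_coeff (n : ℕ) : tau (n + 1) = (qPoch 0 n ^ 24).coeff n := by
  have h : PowerSeries.trunc (n + 1) (E 1)
      = PowerSeries.trunc (n + 1) (qPoch 0 n : PowerSeries ℤ) := by
    ext j
    simp only [PowerSeries.coeff_trunc, Polynomial.coeff_coe]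
    split_ifs with hj
    · exact coeff_E_one (Nat.lt_succ_iff.mp hj)
    · rfl
  have key (f : PowerSeries ℤ) :
      PowerSeries.coeff n f = (PowerSeries.trunc (n + 1) f).coeff n := by
    rw [PowerSeries.coeff_trunc, if_pos n.lt_succ_self]
  rw [tau, Nat.add_sub_cancel, key, ← PowerSeries.trunc_trunc_pow, h, PowerSeries.trunc_trunc_pow,
    ← key, ← Polynomial.coe_pow, Polynomial.coeff_coe]

theorem coeff_expand_mul_eq_zero {R : Type*} [CommSemiring R] {p d : ℕ} (hp : 0 < p) (g : R[X])
    {f : R[X]} (hf : ∀ j ≤ d, j ≡ d [MOD p] → f.coeff j = 0) : (expand R p g * f).coeff d = 0 := by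
  rw [Polynomial.coeff_mul]
  refine Finset.sum_eq_zero fun ⟨i, j⟩ hij => ?_
  rw [Finset.HasAntidiagonal.mem_antidiagonal] at hij
  rw [coeff_expand hp]
  split_ifs with hi
  · have hj : j ≡ d [MOD p] := by
      simpa [← hij] using ((Nat.modEq_zero_iff_dvd.mpr hi).add_right j).symm
    rw [hf j (by omega) hj, mul_zero]
  · rw [zero_mul]

theorem two_mul_add_one_eq_zero_of_two_mul_eq :
    ∀ t x : ZMod 7, 2 * t = x * (x + 1) → t ∈ ({2, 4, 5, 6} : Finset (ZMod 7)) →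
      2 * x + 1 = 0 := by
  decide

theorem coeff_map_jacobiPoly_eq_zero (M : ℕ) {d : ℕ}
    (hd : (d : ZMod 7) ∈ ({2, 4, 5, 6} : Finset (ZMod 7))) :
    ((jacobiPoly M).map (Int.castRingHom (ZMod 7))).coeff d = 0 := by
  rw [Polynomial.coeff_map, jacobiPoly, finsetSum_coeff, map_sum]
  refine Finset.sum_eq_zero fun j _ => ?_
  rw [Polynomial.coeff_C_mul_X_pow]
  split_ifs with h
  · have htri : 2 * (triangular j : ZMod 7) = j * (j + 1) := by
      exact_mod_cast congrArg (Int.cast : ℤ → ZMod 7) (two_mul_triangular j)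
    have := two_mul_add_one_eq_zero_of_two_mul_eq _ _ htri (h ▸ hd)
    simp [this]
  · rw [map_zero]

theorem seven_dvd_coeff_qPoch_pow {n : ℕ}
    (hn : (n : ZMod 7) ∈ ({2, 4, 5, 6} : Finset (ZMod 7))) :
    (7 : ℤ) ∣ (qPoch 0 n ^ 24).coeff n := by
  have : Fact (Nat.Prime 7) := ⟨by norm_num⟩
  rw [show (7 : ℤ) = (7 : ℕ) from rfl, ← ZMod.intCast_zmod_eq_zero_iff_dvd,
    ← eq_intCast (Int.castRingHom (ZMod 7)), ← Polynomial.coeff_map, Polynomial.map_pow]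
  set f := (qPoch 0 n).map (Int.castRingHom (ZMod 7))
  rw [show f ^ 24 = expand (ZMod 7) 7 (f ^ 3) * f ^ 3 by rw [ZMod.expand_card]; ring]
  refine coeff_expand_mul_eq_zero (by norm_num) _ fun j hj hjn => ?_
  rw [← Polynomial.map_pow, Polynomial.coeff_map,
    coeff_eq_of_mk_eq (mk_qPoch_pow_three_eq_jacobiPoly n) (Nat.lt_succ_of_le hj),
    ← Polynomial.coeff_map]
  exact coeff_map_jacobiPoly_eq_zero _ (by rwa [(ZMod.natCast_eq_natCast_iff j n 7).mpr hjn])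

end RamanujanTau

open RamanujanTau

theorem tau_congruence_mod7 (N : ℕ) (hN : 0 < N)
    (h : N % 7 = 0 ∨ N % 7 = 3 ∨ N % 7 = 5 ∨ N % 7 = 6) :
    (7 : ℤ) ∣ tau N := by
  obtain ⟨n, rfl⟩ : ∃ n, N = n + 1 := ⟨N - 1, by omega⟩
  rw [tau_succ_eq_coeff]
  apply seven_dvd_coeff_qPoch_pow
  have hn : n % 7 = 2 ∨ n % 7 = 4 ∨ n % 7 = 5 ∨ n % 7 = 6 := by omega
  rw [← ZMod.natCast_mod]
  rcases hn with hn | hn | hn | hn <;> rw [hn] <;> decide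
end
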